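/- arXiv:1604.07187 — 2 statements merged into one kernel-verified Lean document; each statement's English description precedes it below -/
import Mathlib

section
/- For all positive integers N_min, c, S, and x = ⌈c/S⌉, if r_min ≤ x and y = ⌈(N_min + r_min)/(x+1)⌉ − 1, then (over the rationals) y > ⌊N_min/(c/S + 2)⌋ − 2. -/
/-- Arithmetic core of the general positive theorem: for positive integers
    `N_min`, `c`, `S`, with `x = ⌈c/S⌉`, `r_min ≤ x`, and
    `y = ⌈(N_min + r_min)/(x+1)⌉ − 1`, we have (over the rationals)
    `y > ⌊N_min/(c/S + 2)⌋ − 2`. -/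
theorem positive_lc_groups (Nmin c S x rmin y : ℕ)
    (hN : 1 ≤ Nmin) (hc : 1 ≤ c) (hS : 1 ≤ S)
    (hx : (x : ℤ) = ⌈(c : ℚ) / (S : ℚ)⌉)
    (hr : rmin ≤ x)
    (hy : (y : ℤ) = ⌈((Nmin + rmin : ℕ) : ℚ) / ((x : ℚ) + 1)⌉ - 1) :
    (y : ℚ) > ((⌊(Nmin : ℚ) / ((c : ℚ) / (S : ℚ) + 2)⌋ : ℤ) : ℚ) - 2 := by
  set q : ℚ := (c : ℚ) / (S : ℚ) with hq
  have hq0 : 0 < q := by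
    apply div_pos <;> [exact_mod_cast hc; exact_mod_cast hS]
  have hNpos : (0 : ℚ) < (Nmin : ℚ) := by exact_mod_cast hN
  have hxq : (x : ℚ) = ((⌈q⌉ : ℤ) : ℚ) := by exact_mod_cast hx
  have hx1 : (x : ℚ) + 1 < q + 2 := by
    have h := Int.ceil_lt_add_one q
    rw [hxq]; push_cast; linarith
  have hxpos : (0 : ℚ) < (x : ℚ) + 1 := by positivity
  have h1 : (Nmin : ℚ) / (q + 2) < (Nmin : ℚ) / ((x : ℚ) + 1) :=
    div_lt_div_of_pos_left hNpos hxpos hx1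
  have h2 : (Nmin : ℚ) / ((x : ℚ) + 1) ≤ ((Nmin + rmin : ℕ) : ℚ) / ((x : ℚ) + 1) := by
    gcongr
    push_cast
    linarith [Nat.cast_nonneg (α := ℚ) rmin]
  have h3 : ((Nmin + rmin : ℕ) : ℚ) / ((x : ℚ) + 1)
      ≤ ((⌈((Nmin + rmin : ℕ) : ℚ) / ((x : ℚ) + 1)⌉ : ℤ) : ℚ) := Int.le_ceil _
  have hceil : ((⌈((Nmin + rmin : ℕ) : ℚ) / ((x : ℚ) + 1)⌉ : ℤ) : ℚ) = (y : ℚ) + 1 := by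
    have : (⌈((Nmin + rmin : ℕ) : ℚ) / ((x : ℚ) + 1)⌉ : ℤ) = (y : ℤ) + 1 := by omega
    rw [this]; push_cast; ring
  have hfl : ((⌊(Nmin : ℚ) / (q + 2)⌋ : ℤ) : ℚ) ≤ (Nmin : ℚ) / (q + 2) := Int.floor_le _
  linarith
end

section
/- In the abstract population protocol model, let p be a predicate of the form Σ_{i∈[k]} aᵢNᵢ ≥ c on input multiplicities N₁,…,N_k, with integer coefficients aᵢ such that some aᵢ > 0 and some a_j < 0, and c ≥ 0. Then no protocol that stably computes p can have a reachable output-stable state. -/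
/-- One parallel step of a population protocol with transition function `δ`:
    the scheduler selects a nonempty matching (a multiset of ordered pairs of
    distinct individuals), and each selected pair interacts via `δ` while the
    remaining individuals are unchanged. -/
def PPStep {Q : Type*} [DecidableEq Q] (δ : Q → Q → Q × Q)
    (C C' : Multiset Q) : Prop :=
  ∃ M : Multiset (Q × Q), M ≠ 0 ∧
    M.map Prod.fst + M.map Prod.snd ≤ C ∧
    C' = C - (M.map Prod.fst + M.map Prod.snd)
        + M.map (fun p => (δ p.1 p.2).1) + M.map (fun p => (δ p.1 p.2).2)

/-- Reachability: the reflexive-transitive closure of the one-step relation. -/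
def PPReach {Q : Type*} [DecidableEq Q] (δ : Q → Q → Q × Q) :
    Multiset Q → Multiset Q → Prop :=
  Relation.ReflTransGen (PPStep δ)

/-- A fair infinite execution: every step is legal, and any configuration
    reachable in one step from a configuration occurring infinitely often
    itself occurs infinitely often. -/
def FairExec {Q : Type*} [DecidableEq Q] (δ : Q → Q → Q × Q)
    (e : ℕ → Multiset Q) : Prop :=
  (∀ i, PPStep δ (e i) (e (i + 1))) ∧
  ∀ c c', PPStep δ c c' → (∀ i, ∃ j, i ≤ j ∧ e j = c) →
    (∀ i, ∃ j, i ≤ j ∧ e j = c')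

/-- A state `q` is output-stable if whenever a configuration contains `q`,
    every reachable configuration contains some state with output `O q`. -/
def OutputStable {Q : Type*} [DecidableEq Q] (δ : Q → Q → Q × Q)
    (O : Q → Bool) (q : Q) : Prop :=
  ∀ C C', q ∈ C → PPReach δ C C' → ∃ q' ∈ C', O q' = O q

/-!
Suppose a configuration reachable from an input `w` contains an output-stable state `q`. Adding
enough agents with input of a positive (resp. negative) coefficient makes the predicate disagree
with `O q`, and the old run still embeds into a run from the enlarged input. Continue it to a
recurrent configuration `D`, one whose reachable configurations all lead back to it; it exists
because only finitely many configurations have a given size. The lasso that runs to `D` and then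
forever around a cycle through all of `D`'s component is a fair execution, so from some time on
every reachable configuration, in particular `D`, outputs only the predicate's value. But `D` is
reachable from a configuration containing `q`, so it contains a state with output `O q`.
-/

open Filter Relation

namespace Relation

variable {α : Type*} {r : α → α → Prop}

def IsChainUpTo (r : α → α → Prop) (p : ℕ → α) (n : ℕ) : Prop :=
  ∀ i < n, r (p i) (p (i + 1))

/-- `p 0, …, p m, q 1, q 2, …`; meant for `p m = q 0`. -/
def seqAppend (p : ℕ → α) (m : ℕ) (q : ℕ → α) : ℕ → α :=
  fun i => if i ≤ m then p i else q (i - m)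

lemma seqAppend_of_le {p q : ℕ → α} {m i : ℕ} (h : i ≤ m) : seqAppend p m q i = p i :=
  if_pos h

lemma seqAppend_add {p q : ℕ → α} {m : ℕ} (hpq : p m = q 0) (j : ℕ) :
    seqAppend p m q (m + j) = q j := by
  rcases j.eq_zero_or_pos with rfl | hj
  · simpa [seqAppend] using hpq
  · simp [seqAppend, show ¬ m + j ≤ m by omega]

lemma IsChainUpTo.seqAppend {p q : ℕ → α} {m n : ℕ} (hp : IsChainUpTo r p m)
    (hq : IsChainUpTo r q n) (hpq : p m = q 0) :
    IsChainUpTo r (seqAppend p m q) (m + n) := by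
  intro i hi
  by_cases him : i < m
  · rw [seqAppend_of_le him.le, seqAppend_of_le him]
    exact hp i him
  · obtain ⟨j, rfl⟩ := Nat.exists_eq_add_of_le (not_lt.1 him)
    rw [seqAppend_add hpq, add_assoc, seqAppend_add hpq]
    exact hq j (by omega)

lemma isChainUpTo_edge {x y : α} (h : r x y) :
    IsChainUpTo r (fun i => if i = 0 then x else y) 1 := by
  intro i hi
  obtain rfl : i = 0 := by omega
  simpa using h

lemma exists_isChainUpTo_of_reflTransGen {x y : α} (h : ReflTransGen r x y) :
    ∃ n p, p 0 = x ∧ p n = y ∧ IsChainUpTo r p n := by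
  induction h with
  | refl => exact ⟨0, fun _ => x, rfl, rfl, fun i hi => absurd hi i.not_lt_zero⟩
  | tail _ hbc ih =>
    obtain ⟨n, p, hp0, hpn, hp⟩ := ih
    refine ⟨n + 1, seqAppend p n _, ?_, ?_, hp.seqAppend (isChainUpTo_edge hbc) (by simpa)⟩
    · rwa [seqAppend_of_le n.zero_le]
    · rw [seqAppend_add (by simpa)]
      simp

lemma IsChainUpTo.rel_mod {p : ℕ → α} {m : ℕ} (hp : IsChainUpTo r p m) (hm : 0 < m)
    (hpm : p m = p 0) (n : ℕ) : r (p (n % m)) (p ((n + 1) % m)) := by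
  have h := hp (n % m) (Nat.mod_lt n hm)
  rw [← Nat.mod_add_mod]
  rcases Nat.lt_or_ge (n % m + 1) m with hlt | hge
  · rwa [Nat.mod_eq_of_lt hlt]
  · have heq : n % m + 1 = m := le_antisymm (Nat.mod_lt n hm) hge
    rw [heq, Nat.mod_self, ← hpm]
    rwa [heq] at h

lemma reflTransGen_of_forall_rel {e : ℕ → α} (h : ∀ n, r (e n) (e (n + 1))) {s t : ℕ}
    (hst : s ≤ t) : ReflTransGen r (e s) (e t) :=
  ReflTransGen.lift e (fun _ _ h => h) _ _
    (reflTransGen_of_succ_of_le (fun i j => r (e i) (e j)) (fun i _ => h i) hst)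

/-- `d` lies in a terminal strongly connected component of `r`. -/
def IsRecurrent (r : α → α → Prop) (d : α) : Prop :=
  ∀ y, ReflTransGen r d y → ReflTransGen r y d

lemma exists_isRecurrent {x : α} (hfin : {y | ReflTransGen r x y}.Finite) :
    ∃ d, ReflTransGen r x d ∧ IsRecurrent r d := by
  obtain ⟨d, hxd, hmin⟩ := Set.exists_min_image _ (fun y => {z | ReflTransGen r y z}.ncard)
    hfin ⟨x, .refl⟩
  refine ⟨d, hxd, fun y hdy => ?_⟩
  have hsub : {z | ReflTransGen r y z} ⊆ {z | ReflTransGen r d z} := fun z hz => hdy.trans hz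
  have heq := Set.eq_of_subset_of_ncard_le hsub (hmin y (hxd.trans hdy))
    (hfin.subset fun z hz => hxd.trans hz)
  change d ∈ {z | ReflTransGen r y z}
  rw [heq]
  exact .refl

lemma IsRecurrent.exists_cycle_covering {d d' : α} (hd : IsRecurrent r d)
    (hfin : {y | ReflTransGen r d y}.Finite) (hdd' : r d d') :
    ∃ m p, 0 < m ∧ p 0 = d ∧ p m = d ∧ IsChainUpTo r p m ∧
      ∀ y, ReflTransGen r d y → ∃ i < m, p i = y := by
  refine Set.Finite.induction_on_subset
    (motive := fun S _ => ∃ m p, 0 < m ∧ p 0 = d ∧ p m = d ∧ IsChainUpTo r p m ∧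
      ∀ y ∈ S, ∃ i < m, p i = y) _ hfin ?_ ?_
  · obtain ⟨n, q, hq0, hqn, hq⟩ :=
      exists_isChainUpTo_of_reflTransGen (hd d' (ReflTransGen.single hdd'))
    refine ⟨1 + n, seqAppend _ 1 q, by omega, ?_, ?_,
      (isChainUpTo_edge hdd').seqAppend hq (by simp [hq0]), by simp⟩
    · simp [seqAppend]
    · rwa [seqAppend_add (by simp [hq0])]
  · rintro y S hdy - - ⟨m, p, hm, hp0, hpm, hp, hS⟩
    -- prepend a detour `d →* y →* d` to the cycle through `S`
    obtain ⟨n₁, p₁, hp₁0, hp₁n, hp₁⟩ := exists_isChainUpTo_of_reflTransGen hdy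
    obtain ⟨n₂, p₂, hp₂0, hp₂n, hp₂⟩ := exists_isChainUpTo_of_reflTransGen (hd y hdy)
    have hdetour := hp₁.seqAppend hp₂ (hp₁n.trans hp₂0.symm)
    have hdetour_end : seqAppend p₁ n₁ p₂ (n₁ + n₂) = d := by
      rwa [seqAppend_add (hp₁n.trans hp₂0.symm)]
    refine ⟨n₁ + n₂ + m, seqAppend (seqAppend p₁ n₁ p₂) (n₁ + n₂) p, by omega, ?_, ?_,
      hdetour.seqAppend hp (hdetour_end.trans hp0.symm), ?_⟩
    · rw [seqAppend_of_le (Nat.zero_le _), seqAppend_of_le (Nat.zero_le _), hp₁0]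
    · rwa [seqAppend_add (hdetour_end.trans hp0.symm)]
    · rintro z (rfl | hz)
      · refine ⟨n₁, by omega, ?_⟩
        rw [seqAppend_of_le (by omega), seqAppend_of_le le_rfl, hp₁n]
      · obtain ⟨i, hi, rfl⟩ := hS z hz
        exact ⟨n₁ + n₂ + i, by omega, seqAppend_add (hdetour_end.trans hp0.symm) i⟩

lemma IsRecurrent.exists_chain_frequently {x d d' : α} (hxd : ReflTransGen r x d)
    (hd : IsRecurrent r d) (hfin : {y | ReflTransGen r d y}.Finite) (hdd' : r d d') :
    ∃ e : ℕ → α, e 0 = x ∧ (∀ n, r (e n) (e (n + 1))) ∧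
      (∀ᶠ n in atTop, ReflTransGen r d (e n)) ∧
      ∀ y, ReflTransGen r d y → ∃ᶠ n in atTop, e n = y := by
  obtain ⟨L, f, hf0, hfL, hf⟩ := exists_isChainUpTo_of_reflTransGen hxd
  obtain ⟨m, p, hm, hp0, hpm, hp, hcover⟩ := hd.exists_cycle_covering hfin hdd'
  have hjoin : f L = p (0 % m) := by rw [Nat.zero_mod, hfL, hp0]
  set e := seqAppend f L fun n => p (n % m) with he_def
  have he : ∀ n, r (e n) (e (n + 1)) := fun n =>
    hf.seqAppend (n := n + 1) (fun i _ => hp.rel_mod hm (hpm.trans hp0.symm) i) hjoin n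
      (by omega)
  have heL : e L = d := by rw [he_def, seqAppend_of_le le_rfl, hfL]
  refine ⟨e, by rw [he_def, seqAppend_of_le L.zero_le, hf0], he,
    eventually_atTop.2 ⟨L, fun n hn => heL ▸ reflTransGen_of_forall_rel he hn⟩,
    fun y hy => frequently_atTop.2 fun N => ?_⟩
  obtain ⟨i, hi, rfl⟩ := hcover y hy
  refine ⟨L + (i + m * N), by nlinarith, ?_⟩
  rw [he_def, seqAppend_add (q := fun n => p (n % m)) hjoin, Nat.add_mul_mod_self_left,
    Nat.mod_eq_of_lt hi]

end Relation

section PopulationProtocol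

variable {Q : Type*} [DecidableEq Q] {δ : Q → Q → Q × Q}

lemma PPStep.add_right {C C' : Multiset Q} (h : PPStep δ C C') (D : Multiset Q) :
    PPStep δ (C + D) (C' + D) := by
  obtain ⟨M, hM, hle, rfl⟩ := h
  refine ⟨M, hM, hle.trans (Multiset.le_add_right _ _), ?_⟩
  rw [add_comm C D, add_tsub_assoc_of_le hle]
  ac_rfl

lemma PPReach.add_right {C C' : Multiset Q} (h : PPReach δ C C') (D : Multiset Q) :
    PPReach δ (C + D) (C' + D) :=
  ReflTransGen.lift (· + D) (fun _ _ hstep => hstep.add_right D) _ _ h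

lemma PPStep.card_eq {C C' : Multiset Q} (h : PPStep δ C C') : C'.card = C.card := by
  obtain ⟨M, -, hle, rfl⟩ := h
  have := Multiset.card_le_card hle
  simp only [Multiset.card_add, Multiset.card_sub hle, Multiset.card_map] at this ⊢
  omega

lemma PPReach.card_eq {C C' : Multiset Q} (h : PPReach δ C C') : C'.card = C.card := by
  induction h with
  | refl => rfl
  | tail _ hstep ih => rw [hstep.card_eq, ih]

lemma PPStep.exists_of_two_le_card {C : Multiset Q} (h : 2 ≤ C.card) : ∃ C', PPStep δ C C' := by
  obtain ⟨x, hx⟩ := Multiset.card_pos_iff_exists_mem.1 (by omega : 0 < C.card)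
  obtain ⟨C₁, rfl⟩ := Multiset.exists_cons_of_mem hx
  have hC₁ : 0 < C₁.card := by
    simp only [Multiset.card_cons] at h
    omega
  obtain ⟨y, hy⟩ := Multiset.card_pos_iff_exists_mem.1 hC₁
  obtain ⟨C₂, rfl⟩ := Multiset.exists_cons_of_mem hy
  exact ⟨_, {(x, y)}, by simp, by simp [Multiset.singleton_add], rfl⟩

lemma finite_setOf_ppReach [Fintype Q] (C : Multiset Q) : {C' | PPReach δ C C'}.Finite :=
  (Set.finite_range (Sym.toMultiset : Sym Q C.card → Multiset Q)).subset
    fun _ hC' => ⟨⟨_, PPReach.card_eq hC'⟩, rfl⟩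

lemma exists_fairExec_of_isRecurrent [Fintype Q] {C D : Multiset Q} (hCD : PPReach δ C D)
    (hD : IsRecurrent (PPStep δ) D) (hcard : 2 ≤ D.card) :
    ∃ e, e 0 = C ∧ FairExec δ e ∧ ∃ᶠ n in atTop, e n = D := by
  obtain ⟨D', hDD'⟩ := PPStep.exists_of_two_le_card (δ := δ) hcard
  obtain ⟨e, he0, he, hev, hfreq⟩ := hD.exists_chain_frequently hCD (finite_setOf_ppReach D) hDD'
  refine ⟨e, he0, ⟨he, fun c c' hcc' hc => ?_⟩, hfreq D .refl⟩
  obtain ⟨n, hn, rfl⟩ := (hev.and_frequently (frequently_atTop.2 hc)).exists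
  exact frequently_atTop.1 (hfreq c' (hn.tail hcc'))

end PopulationProtocol

lemma sum_mul_count_eq_sum_map {ι : Type*} [Fintype ι] [DecidableEq ι] (a : ι → ℤ)
    (w : Multiset ι) : ∑ i, a i * (w.count i : ℤ) = (w.map a).sum := by
  rw [Finset.sum_multiset_map_count, ← Finset.sum_subset (Finset.subset_univ w.toFinset)]
  · simp only [nsmul_eq_mul, mul_comm]
  · intro i _ hi
    simp [Multiset.count_eq_zero.2 (by simpa using hi)]

lemma exists_decide_le_sum_mul_count_add {ι : Type*} [Fintype ι] [DecidableEq ι]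
    {a : ι → ℤ} (hpos : ∃ i, 0 < a i) (hneg : ∃ j, a j < 0) (c : ℤ) (w : Multiset ι)
    (b : Bool) : ∃ v ≠ 0, decide (c ≤ ∑ i, a i * ((w + v).count i : ℤ)) = b := by
  simp only [sum_mul_count_eq_sum_map, Multiset.map_add, Multiset.sum_add]
  set S := (w.map a).sum
  cases b
  · obtain ⟨j, hj⟩ := hneg
    refine ⟨Multiset.replicate ((S - c).toNat + 1) j, by simp, ?_⟩
    simp only [Multiset.map_replicate, Multiset.sum_replicate, nsmul_eq_mul,
      decide_eq_false_iff_not, not_le]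
    have := Int.self_le_toNat (S - c)
    push_cast
    nlinarith
  · obtain ⟨i, hi⟩ := hpos
    refine ⟨Multiset.replicate ((c - S).toNat + 1) i, by simp, ?_⟩
    simp only [Multiset.map_replicate, Multiset.sum_replicate, nsmul_eq_mul, decide_eq_true_eq]
    have := Int.self_le_toNat (c - S)
    push_cast
    nlinarith

theorem mixed_signs_no_output_stable_general {Q : Type*} [DecidableEq Q] [Fintype Q]
    (k : ℕ) (a : Fin k → ℤ) (c : ℤ)
    (hpos : ∃ i, 0 < a i) (hneg : ∃ j, a j < 0)
    (δ : Q → Q → Q × Q) (O : Q → Bool) (I : Fin k → Q)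
    (hcomputes : ∀ w : Multiset (Fin k), w ≠ 0 →
      ∀ e : ℕ → Multiset Q, e 0 = w.map I → FairExec δ e →
        ∃ t, ∀ C', PPReach δ (e t) C' → ∀ q ∈ C',
          O q = decide (c ≤ ∑ i, a i * (w.count i : ℤ))) :
    ¬ ∃ q : Q, (∃ (w : Multiset (Fin k)) (C : Multiset Q),
        w ≠ 0 ∧ PPReach δ (w.map I) C ∧ q ∈ C) ∧ OutputStable δ O q := by
  rintro ⟨q, ⟨w, C, hw, hwC, hqC⟩, hq⟩
  obtain ⟨v, hv, hflip⟩ := exists_decide_le_sum_mul_count_add hpos hneg c w (!O q)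
  have hreach : PPReach δ ((w + v).map I) (C + v.map I) := by
    simpa only [Multiset.map_add] using hwC.add_right (v.map I)
  obtain ⟨D, hCD, hD⟩ := exists_isRecurrent (finite_setOf_ppReach (δ := δ) (C + v.map I))
  have hcard : 2 ≤ D.card := by
    rw [PPReach.card_eq (hreach.trans hCD), Multiset.card_map, Multiset.card_add]
    have hw_pos := Multiset.card_pos.2 hw
    have hv_pos := Multiset.card_pos.2 hv
    omega
  obtain ⟨e, he0, hfair, hDfreq⟩ := exists_fairExec_of_isRecurrent (hreach.trans hCD) hD hcard
  obtain ⟨t, ht⟩ := hcomputes (w + v) (by simp [hw]) e he0 hfair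
  obtain ⟨t', htt', het'⟩ := frequently_atTop.1 hDfreq t
  obtain ⟨q', hq'D, hq'⟩ := hq _ D (Multiset.mem_add.2 (Or.inl hqC)) hCD
  have hq'out := ht D (het' ▸ reflTransGen_of_forall_rel hfair.1 htt') q' hq'D
  rw [hflip, hq'] at hq'out
  exact Bool.not_ne_self (O q) hq'out.symm

/-- No protocol stably computing a mixed-sign threshold predicate
    `Σᵢ aᵢNᵢ ≥ c` (some `aᵢ > 0`, some `a_j < 0`, `c ≥ 0`) can have a
    reachable output-stable state. Inputs are indexed by `Fin k`, the input
    function is `I`, and input assignments are nonempty multisets `w` over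
    `Fin k` with multiplicities `Nᵢ = w.count i`. -/
theorem mixed_signs_no_output_stable {Q : Type*} [DecidableEq Q] [Fintype Q]
    (k : ℕ) (a : Fin k → ℤ) (c : ℤ) (hc : 0 ≤ c)
    (hpos : ∃ i, 0 < a i) (hneg : ∃ j, a j < 0)
    (δ : Q → Q → Q × Q) (O : Q → Bool) (I : Fin k → Q)
    (hcomputes : ∀ w : Multiset (Fin k), w ≠ 0 →
      ∀ e : ℕ → Multiset Q, e 0 = w.map I → FairExec δ e →
        ∃ t, ∀ C', PPReach δ (e t) C' → ∀ q ∈ C',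
          O q = decide (c ≤ ∑ i, a i * (w.count i : ℤ))) :
    ¬ ∃ q : Q, (∃ (w : Multiset (Fin k)) (C : Multiset Q),
        w ≠ 0 ∧ PPReach δ (w.map I) C ∧ q ∈ C) ∧ OutputStable δ O q :=
  mixed_signs_no_output_stable_general k a c hpos hneg δ O I hcomputes
end
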